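/- arXiv:1209.3451 — 5 statements merged into one kernel-verified Lean document; each statement's English description precedes it below -/
import Mathlib

section
/- For every h > 0, every real X, and every H > 0, the point z = X + iH satisfies |1 + i·tan(πz/h)| ≤ 2e^{-2πH/h}/(1 − e^{-2πH/h}). -/
/-!
With `w = πz/h` and `q = exp (2iw)` one has `1 + i tan w = e^{iw} / cos w = 2q / (1 + q)`, and
`‖q‖ = e^{-2 Im w} = e^{-2πH/h} < 1`. The bound is then the triangle inequality
`‖1 + q‖ ≥ 1 - ‖q‖`.
-/

open Complex

lemma Complex.cos_eq_exp_neg_mul_I_mul (w : ℂ) :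
    cos w = exp (-(w * I)) * (1 + exp (2 * w * I)) / 2 := by
  rw [cos, mul_add, ← exp_add]
  ring_nf

lemma Complex.one_add_I_mul_tan {w : ℂ} (hw : 1 + exp (2 * w * I) ≠ 0) :
    1 + I * tan w = 2 * exp (2 * w * I) / (1 + exp (2 * w * I)) := by
  have hcos : cos w ≠ 0 := by
    rw [cos_eq_exp_neg_mul_I_mul]
    exact div_ne_zero (mul_ne_zero (exp_ne_zero _) hw) two_ne_zero
  have hsq : exp (2 * w * I) = exp (w * I) * exp (w * I) := by
    rw [← exp_add]; ring_nf
  rw [tan_eq_sin_div_cos, mul_div_assoc', one_add_div hcos, mul_comm I (sin w), cos_add_sin_I,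
    cos_eq_exp_neg_mul_I_mul, hsq, exp_neg]
  field_simp

lemma Complex.norm_two_mul_div_one_add_le {q : ℂ} (hq : ‖q‖ < 1) :
    ‖2 * q / (1 + q)‖ ≤ 2 * ‖q‖ / (1 - ‖q‖) := by
  have hden : 1 - ‖q‖ ≤ ‖1 + q‖ := by
    simpa using norm_sub_norm_le (1 : ℂ) (-q)
  rw [norm_div, norm_mul, Complex.norm_two]
  exact div_le_div_of_nonneg_left (by positivity) (by linarith) hden

lemma Complex.norm_exp_two_mul_mul_I (w : ℂ) : ‖exp (2 * w * I)‖ = Real.exp (-2 * w.im) := by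
  simp [norm_exp]

theorem stmt_0 (h X H : ℝ) (hh : 0 < h) (hH : 0 < H) :
    ‖1 + Complex.I *
        Complex.tan ((Real.pi : ℂ) * ((X : ℂ) + (H : ℂ) * Complex.I) / (h : ℂ))‖ ≤
      2 * Real.exp (-2 * Real.pi * H / h) / (1 - Real.exp (-2 * Real.pi * H / h)) := by
  set w : ℂ := (Real.pi : ℂ) * ((X : ℂ) + (H : ℂ) * Complex.I) / (h : ℂ)
  have him : w.im = Real.pi * H / h := by
    simp only [w, div_ofReal_im, mul_im, ofReal_re, ofReal_im, add_im, add_re, mul_re, I_re, I_im]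
    ring
  have hnorm : ‖exp (2 * w * I)‖ = Real.exp (-2 * Real.pi * H / h) := by
    rw [norm_exp_two_mul_mul_I, him]; ring_nf
  have hlt : ‖exp (2 * w * I)‖ < 1 := by
    rw [hnorm, Real.exp_lt_one_iff]
    exact div_neg_of_neg_of_pos (by nlinarith [Real.pi_pos]) hh
  have hne : 1 + exp (2 * w * I) ≠ 0 := by
    intro h0
    rw [eq_neg_of_add_eq_zero_right h0, norm_neg, norm_one] at hlt
    exact lt_irrefl _ hlt
  rw [one_add_I_mul_tan hne, ← hnorm]
  exact norm_two_mul_div_one_add_le hlt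
end

section
/- Let x > 0 and h > 0 with x ≠ √2·π/h, and set H := π/h. Then the integral J_H := ∫_{X ∈ ℝ} f(X + iH)·(1 + i·tan(π(X + iH)/h)) dX satisfies |J_H| ≤ x·e^{-π²/h²} / (√π · |π²/h² − x²/2| · (1 − e^{-2π²/h²})). -/
/-!
On the line `Im z = H` the Gaussian factor of `f` has modulus `e^{H² - X²}`. Writing
`x² + i z² = i (z² - w²)` with `w = (x/√2)(1 + i)`, the denominator is at least
`|Im (z - w)| · |Im (z + w)| = |H² - x²/2|`. Moreover `1 + i tan u = 2 e^{2iu} / (e^{2iu} + 1)`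
has modulus at most `2 e^{-2 Im u} / (1 - e^{-2 Im u})`, and for `H = π/h` the point
`u = πz/h` has `Im u = H²`. The integrand is thus dominated by a multiple of `e^{-X²}`,
whose integral is `√π`.
-/

noncomputable section

/-- The integrand `f(z) = e^{i(x² + π/4)} · (x/(2π)) · e^{-z²}/(x² + i z²)` for fixed `x`. -/
def f (x : ℝ) (z : ℂ) : ℂ :=
  Complex.exp (Complex.I * ((x : ℂ) ^ 2 + (Real.pi / 4 : ℂ))) * ((x : ℂ) / (2 * Real.pi : ℂ)) *
    Complex.exp (-z ^ 2) / ((x : ℂ) ^ 2 + Complex.I * z ^ 2)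

open Complex MeasureTheory

lemma one_add_I_mul_tan_eq {w : ℂ} (hw : exp (2 * I * w) + 1 ≠ 0) :
    1 + I * tan w = 2 * exp (2 * I * w) / (exp (2 * I * w) + 1) := by
  have hsq : exp (2 * I * w) = exp (w * I) * exp (w * I) := by rw [← exp_add]; ring_nf
  have hinv : exp (-w * I) = (exp (w * I))⁻¹ := by rw [← exp_neg]; ring_nf
  have hu : exp (w * I) ≠ 0 := exp_ne_zero _
  have hcos : cos w = (exp (2 * I * w) + 1) / (2 * exp (w * I)) := by
    rw [cos, hinv, hsq]; field_simp
  rw [tan_eq_sin_div_cos, hcos, sin, hinv, hsq]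
  have hw' : exp (I * w) ^ 2 + 1 ≠ 0 := by rwa [mul_comm I, sq, ← hsq]
  field_simp
  rw [I_sq]
  field_simp
  ring

lemma norm_one_add_I_mul_tan_le {w : ℂ} (hw : 0 < w.im) :
    ‖1 + I * tan w‖ ≤ 2 * Real.exp (-2 * w.im) / (1 - Real.exp (-2 * w.im)) := by
  have hnorm : ‖exp (2 * I * w)‖ = Real.exp (-2 * w.im) := by simp [norm_exp]
  have hlt : Real.exp (-2 * w.im) < 1 := Real.exp_lt_one_iff.mpr (by linarith)
  have hden : 1 - Real.exp (-2 * w.im) ≤ ‖exp (2 * I * w) + 1‖ := by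
    rw [← hnorm, add_comm]
    simpa using norm_sub_norm_le (1 : ℂ) (-exp (2 * I * w))
  rw [one_add_I_mul_tan_eq (norm_pos_iff.mp (by linarith)), norm_div, norm_mul, hnorm,
    Complex.norm_two]
  gcongr

lemma abs_im_sq_sub_im_sq_le_norm_sq_sub_sq (z w : ℂ) :
    |z.im ^ 2 - w.im ^ 2| ≤ ‖z ^ 2 - w ^ 2‖ := by
  calc |z.im ^ 2 - w.im ^ 2| = |(z - w).im| * |(z + w).im| := by
        rw [← abs_mul, sub_im, add_im]; ring_nf
    _ ≤ ‖z - w‖ * ‖z + w‖ := by gcongr <;> exact abs_im_le_norm _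
    _ = ‖z ^ 2 - w ^ 2‖ := by rw [← norm_mul]; ring_nf

lemma abs_im_sq_sub_le_norm_sq_add_I_mul_sq (x : ℝ) (z : ℂ) :
    |z.im ^ 2 - x ^ 2 / 2| ≤ ‖(x : ℂ) ^ 2 + I * z ^ 2‖ := by
  set c : ℝ := x / √2
  have hc : c ^ 2 = x ^ 2 / 2 := by simp [c, div_pow]
  have hroot : ((c + c * I) ^ 2 : ℂ) = x ^ 2 * I := by
    have : (c : ℂ) ^ 2 = x ^ 2 / 2 := by exact_mod_cast hc
    linear_combination (2 * I) * this + (c : ℂ) ^ 2 * I_sq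
  have hfac : (x : ℂ) ^ 2 + I * z ^ 2 = I * (z ^ 2 - (c + c * I) ^ 2) := by
    linear_combination I * hroot + (x : ℂ) ^ 2 * I_sq
  rw [hfac, norm_mul, norm_I, one_mul, ← hc]
  simpa using abs_im_sq_sub_im_sq_le_norm_sq_sub_sq z (c + c * I)

lemma norm_integral_le_mul_sqrt_pi {E : Type*} [NormedAddCommGroup E] [NormedSpace ℝ E]
    {g : ℝ → E} {C : ℝ} (hg : ∀ X, ‖g X‖ ≤ C * Real.exp (-X ^ 2)) :
    ‖∫ X, g X‖ ≤ C * √Real.pi := by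
  have hgauss : Integrable fun X : ℝ ↦ C * Real.exp (-X ^ 2) := by
    simpa using (integrable_exp_neg_mul_sq one_pos).const_mul C
  calc ‖∫ X, g X‖ ≤ ∫ X, C * Real.exp (-X ^ 2) :=
        norm_integral_le_of_norm_le hgauss (.of_forall hg)
    _ = C * √Real.pi := by rw [integral_const_mul]; congr 1; simpa using integral_gaussian 1

lemma norm_f_le {x : ℝ} (hx : 0 ≤ x) {z : ℂ} (hz : z.im ^ 2 ≠ x ^ 2 / 2) :
    ‖f x z‖ ≤ x / (2 * Real.pi) * Real.exp (z.im ^ 2 - z.re ^ 2) / |z.im ^ 2 - x ^ 2 / 2| := by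
  have hphase : ‖exp (I * ((x : ℂ) ^ 2 + (Real.pi / 4 : ℂ)))‖ = 1 := by
    simp [norm_exp, ← ofReal_pow]
  have hconst : ‖(x : ℂ) / (2 * Real.pi : ℂ)‖ = x / (2 * Real.pi) := by
    simp [abs_of_nonneg hx, abs_of_pos Real.pi_pos]
  have hgauss : ‖exp (-z ^ 2)‖ = Real.exp (z.im ^ 2 - z.re ^ 2) := by
    simp [norm_exp, sq]
  rw [f, norm_div, norm_mul, norm_mul, hphase, hconst, hgauss, one_mul]
  have hpos : 0 < |z.im ^ 2 - x ^ 2 / 2| := abs_pos.mpr (sub_ne_zero.mpr hz)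
  gcongr
  exact abs_im_sq_sub_le_norm_sq_add_I_mul_sq x z

lemma norm_integrand_le {x h H : ℝ} (hx : 0 ≤ x) (hH : Real.pi / h = H) (hH0 : 0 < H)
    (hpole : H ^ 2 ≠ x ^ 2 / 2) (X : ℝ) :
    ‖f x (X + H * I) * (1 + I * tan (Real.pi * (X + H * I) / h))‖ ≤
      x * Real.exp (-H ^ 2) /
        (Real.pi * |H ^ 2 - x ^ 2 / 2| * (1 - Real.exp (-2 * H ^ 2))) * Real.exp (-X ^ 2) := by
  have hf := norm_f_le hx (z := X + H * I) (by simpa using hpole)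
  have him : (Real.pi * (X + H * I) / h : ℂ).im = H ^ 2 := by
    simp [← hH]; ring
  have htan := norm_one_add_I_mul_tan_le (w := Real.pi * (X + H * I) / h) (by rw [him]; positivity)
  rw [him] at htan
  rw [norm_mul]
  calc _ ≤ x / (2 * Real.pi) * Real.exp (H ^ 2 - X ^ 2) / |H ^ 2 - x ^ 2 / 2| *
        (2 * Real.exp (-2 * H ^ 2) / (1 - Real.exp (-2 * H ^ 2))) := by
        gcongr
        simpa using hf
    _ = _ := by
        field_simp
        simp only [mul_assoc, ← Real.exp_add]
        ring_nf

theorem stmt_1 (x h : ℝ) (hx : 0 < x) (hh : 0 < h)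
    (hne : x ≠ Real.sqrt 2 * Real.pi / h) :
    ‖∫ X : ℝ, f x ((X : ℂ) + (Real.pi / h : ℂ) * Complex.I) *
        (1 + Complex.I * Complex.tan ((Real.pi : ℂ) *
          ((X : ℂ) + (Real.pi / h : ℂ) * Complex.I) / (h : ℂ)))‖ ≤
      x * Real.exp (-Real.pi ^ 2 / h ^ 2) /
        (Real.sqrt Real.pi * |Real.pi ^ 2 / h ^ 2 - x ^ 2 / 2| *
          (1 - Real.exp (-2 * Real.pi ^ 2 / h ^ 2))) := by
  set H : ℝ := Real.pi / h with hH
  have hH0 : 0 < H := div_pos Real.pi_pos hh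
  have hH2 : Real.pi ^ 2 / h ^ 2 = H ^ 2 := by rw [hH, div_pow]
  rw [show (Real.pi : ℂ) / h = H by simp [hH], neg_div, hH2,
    show -2 * Real.pi ^ 2 / h ^ 2 = -2 * H ^ 2 by rw [← hH2]; ring]
  have hpole : H ^ 2 ≠ x ^ 2 / 2 := by
    contrapose! hne
    rw [mul_div_assoc, ← hH, ← Real.sqrt_sq hx.le, ← Real.sqrt_sq hH0.le,
      ← Real.sqrt_mul zero_le_two]
    congr 1; linarith
  calc _ ≤ _ := norm_integral_le_mul_sqrt_pi (norm_integrand_le hx.le hH.symm hH0 hpole)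
    _ = _ := by
      field_simp
      rw [Real.sq_sqrt Real.pi_pos.le]
end
end

section
/- Let x > 0, h > 0, and N ≥ 1 an integer, and set τ_m := (m − 1/2)h. Then the truncation tail T_N := 2h·Σ_{m=N+1}^∞ f(τ_m) satisfies |T_N| ≤ (2h·τ_{N+1} + 1)·x·e^{-τ_{N+1}²} / (2π·τ_{N+1}·√(x⁴ + τ_{N+1}⁴)). -/
/-!
Along the nodes `τ_{N+1} + j h` the Gaussian factor decays at least geometrically:
`e^{-(a + jh)²} ≤ e^{-a²} (e^{-2ah})^j`, while `|x² + i t²| = √(x⁴ + t⁴)` only grows. The tail is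
therefore dominated by a geometric series, and `1 / (1 - e^{-u}) ≤ 1 + 1/u` (i.e. `u + 1 ≤ e^u`)
with `u = 2 h τ_{N+1}` turns its sum into the stated bound.
-/

noncomputable section

def τ (h : ℝ) (m : ℕ) : ℝ := ((m : ℝ) - 1 / 2) * h

open Real

lemma norm_f {x : ℝ} (hx : 0 < x) (t : ℝ) :
    ‖f x t‖ = x / (2 * π) * exp (-t ^ 2) / √(x ^ 4 + t ^ 4) := by
  have hden : (x : ℂ) ^ 2 + Complex.I * (t : ℂ) ^ 2 =
      ((x ^ 2 : ℝ) : ℂ) + ((t ^ 2 : ℝ) : ℂ) * Complex.I := by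
    push_cast; ring
  simp only [f, norm_div, norm_mul, Complex.norm_exp, hden, Complex.norm_add_mul_I]
  simp [← Complex.ofReal_pow, abs_of_pos hx, abs_of_pos pi_pos, ← pow_mul]

lemma τ_add (h : ℝ) (m j : ℕ) : τ h (m + j) = τ h m + j * h := by
  simp only [τ]; push_cast; ring

lemma exp_neg_sq_add_le (a s : ℝ) : exp (-(a + s) ^ 2) ≤ exp (-a ^ 2) * exp (-(2 * a * s)) := by
  rw [← exp_add, exp_le_exp]
  nlinarith [sq_nonneg s]

lemma norm_f_add_le {x a s : ℝ} (hx : 0 < x) (ha : 0 ≤ a) (hs : 0 ≤ s) :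
    ‖f x ↑(a + s)‖ ≤ x / (2 * π) * exp (-a ^ 2) / √(x ^ 4 + a ^ 4) * exp (-(2 * a * s)) := by
  have hsqrt : √(x ^ 4 + a ^ 4) ≤ √(x ^ 4 + (a + s) ^ 4) := by
    gcongr; linarith
  calc ‖f x ↑(a + s)‖ = x / (2 * π) * exp (-(a + s) ^ 2) / √(x ^ 4 + (a + s) ^ 4) := norm_f hx _
    _ ≤ x / (2 * π) * (exp (-a ^ 2) * exp (-(2 * a * s))) / √(x ^ 4 + a ^ 4) := by
        gcongr
        exact exp_neg_sq_add_le a s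
    _ = _ := by ring

lemma inv_one_sub_exp_neg_le {u : ℝ} (hu : 0 < u) : (1 - exp (-u))⁻¹ ≤ 1 + u⁻¹ := by
  have hpos : 0 < 1 - exp (-u) := sub_pos.mpr (exp_lt_one_iff.mpr (neg_lt_zero.mpr hu))
  have hgrowth : (u + 1) * exp (-u) ≤ 1 := by
    calc (u + 1) * exp (-u) ≤ exp u * exp (-u) := by gcongr; exact add_one_le_exp u
      _ = 1 := by rw [← exp_add, add_neg_cancel, exp_zero]
  rw [show 1 + u⁻¹ = (u + 1) / u by field_simp, inv_le_iff_one_le_mul₀ hpos,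
    div_mul_eq_mul_div, le_div_iff₀ hu]
  nlinarith

lemma norm_tsum_f_le {x a h : ℝ} (hx : 0 < x) (ha : 0 < a) (hh : 0 < h) :
    ‖∑' j : ℕ, f x ↑(a + j * h)‖ ≤
      x / (2 * π) * exp (-a ^ 2) / √(x ^ 4 + a ^ 4) * (1 - exp (-(2 * a * h)))⁻¹ := by
  have hr : exp (-(2 * a * h)) < 1 := exp_lt_one_iff.mpr (by nlinarith)
  refine tsum_of_norm_bounded ((hasSum_geometric_of_lt_one (exp_pos _).le hr).mul_left _)
    fun j => ?_
  rw [← exp_nat_mul, mul_neg, show (j : ℝ) * (2 * a * h) = 2 * a * (j * h) by ring]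
  exact norm_f_add_le hx ha.le (by positivity)

theorem stmt_3_general (x h : ℝ) (hx : 0 < x) (hh : 0 < h) (N : ℕ) :
    ‖2 * (h : ℂ) * ∑' j : ℕ, f x ((τ h (N + 1 + j) : ℝ))‖ ≤
      (2 * h * τ h (N + 1) + 1) * x * Real.exp (-(τ h (N + 1)) ^ 2) /
        (2 * Real.pi * τ h (N + 1) * Real.sqrt (x ^ 4 + (τ h (N + 1)) ^ 4)) := by
  simp_rw [τ_add h (N + 1)]
  set a := τ h (N + 1)
  have ha : 0 < a := by
    simp only [a, τ]; push_cast
    nlinarith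
  rw [norm_mul, norm_mul, Complex.norm_real, norm_of_nonneg hh.le, Complex.norm_two]
  calc 2 * h * ‖∑' j : ℕ, f x ↑(a + j * h)‖
      ≤ 2 * h * (x / (2 * π) * exp (-a ^ 2) / √(x ^ 4 + a ^ 4) * (1 + (2 * a * h)⁻¹)) := by
        gcongr
        exact (norm_tsum_f_le hx ha hh).trans
          (by gcongr; exact inv_one_sub_exp_neg_le (by positivity))
    _ = _ := by
        have : 0 < √(x ^ 4 + a ^ 4) := by positivity
        field_simp

theorem stmt_3 (x h : ℝ) (hx : 0 < x) (hh : 0 < h) (N : ℕ) (hN : 1 ≤ N) :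
    ‖2 * (h : ℂ) * ∑' j : ℕ, f x ((τ h (N + 1 + j) : ℝ))‖ ≤
      (2 * h * τ h (N + 1) + 1) * x * Real.exp (-(τ h (N + 1)) ^ 2) /
        (2 * Real.pi * τ h (N + 1) * Real.sqrt (x ^ 4 + (τ h (N + 1)) ^ 4)) :=
  stmt_3_general x h hx hh N
end
end

section
/- For every real y ≥ 0, (1 + π·y²)·e^{-2y²}·(1 + (4/π)·(∫_0^y e^{t²} dt)²) ≥ 1. -/
/-!
Write `I = ∫₀^y e^{t²} dt`. Since `t ≤ y` on `[0, y]`, `e^{y²} - 1 = ∫₀^y 2t e^{t²} dt ≤ 2yI`.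
By Cauchy–Schwarz applied to the vectors `(1, √π y)` and `(1, 2I/√π)`,
`(1 + 2yI)² ≤ (1 + πy²)(1 + (4/π) I²)`, and the left side is at least `e^{2y²}`.
-/

open Real intervalIntegral

lemma exp_sq_sub_one_le_two_mul_integral {y : ℝ} (hy : 0 ≤ y) :
    exp (y ^ 2) - 1 ≤ 2 * y * ∫ t in (0 : ℝ)..y, exp (t ^ 2) := by
  have hderiv : ∀ t ∈ Set.uIcc (0 : ℝ) y,
      HasDerivAt (fun t => exp (t ^ 2)) (2 * t * exp (t ^ 2)) t := fun t _ => by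
    simpa [mul_comm] using (hasDerivAt_pow 2 t).exp
  have hcont : Continuous fun t : ℝ => exp (t ^ 2) := by fun_prop
  calc exp (y ^ 2) - 1 = ∫ t in (0 : ℝ)..y, 2 * t * exp (t ^ 2) := by
        rw [integral_eq_sub_of_hasDerivAt hderiv ((by fun_prop : Continuous
          fun t : ℝ => 2 * t * exp (t ^ 2)).intervalIntegrable _ _)]
        simp
    _ ≤ ∫ t in (0 : ℝ)..y, 2 * y * exp (t ^ 2) := by
        refine integral_mono_on hy ((by fun_prop : Continuous
          fun t : ℝ => 2 * t * exp (t ^ 2)).intervalIntegrable _ _)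
          ((hcont.const_mul _).intervalIntegrable _ _) fun t ht => ?_
        gcongr
        exact ht.2
    _ = 2 * y * ∫ t in (0 : ℝ)..y, exp (t ^ 2) := integral_const_mul _ _

lemma sq_one_add_two_mul_le {c : ℝ} (hc : 0 < c) (y I : ℝ) :
    (1 + 2 * y * I) ^ 2 ≤ (1 + c * y ^ 2) * (1 + 4 / c * I ^ 2) := by
  have hgap : (1 + c * y ^ 2) * (1 + 4 / c * I ^ 2) - (1 + 2 * y * I) ^ 2
      = (c * y - 2 * I) ^ 2 / c := by
    field_simp
    ring
  have : 0 ≤ (c * y - 2 * I) ^ 2 / c := by positivity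
  linarith

theorem stmt_18 (y : ℝ) (hy : 0 ≤ y) :
    1 ≤ (1 + Real.pi * y ^ 2) * Real.exp (-2 * y ^ 2) *
      (1 + 4 / Real.pi * (∫ t in (0 : ℝ)..y, Real.exp (t ^ 2)) ^ 2) := by
  set I := ∫ t in (0 : ℝ)..y, exp (t ^ 2)
  have hexp_sq : exp (y ^ 2) ^ 2 ≤ (1 + 2 * y * I) ^ 2 :=
    pow_le_pow_left₀ (exp_pos _).le
      (by linarith [exp_sq_sub_one_le_two_mul_integral hy]) 2
  have hcancel : exp (-2 * y ^ 2) * exp (y ^ 2) ^ 2 = 1 := by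
    rw [← exp_nat_mul, ← exp_add]
    norm_num
  calc (1 : ℝ) = exp (-2 * y ^ 2) * exp (y ^ 2) ^ 2 := hcancel.symm
    _ ≤ exp (-2 * y ^ 2) * ((1 + π * y ^ 2) * (1 + 4 / π * I ^ 2)) := by
        gcongr
        exact hexp_sq.trans (sq_one_add_two_mul_le pi_pos y I)
    _ = (1 + π * y ^ 2) * exp (-2 * y ^ 2) * (1 + 4 / π * I ^ 2) := by ring
end

section
/- For every real y, e^{-2y²}·(1 + (4/π)·(∫_0^y e^{t²} dt)²) ≤ 2/π + (1 − 2/π)·e^{-2y²}; in particular e^{-2y²}·(1 + (4/π)·(∫_0^y e^{t²} dt)²) ≤ 1. -/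
/-! With `F y = ∫₀ʸ exp (t²) dt`, the whole content is `F y ² ≤ (exp (2 y²) - 1) / 2`.
Since `F` is odd it suffices to take `y ≥ 0`; there both sides vanish at `0` and their
derivatives compare as `2 F x exp (x²) ≤ 2 x exp (2 x²)`, because `F x ≤ x exp (x²)` (the
integrand is largest at the endpoint). Multiplying by `exp (-2 y²)` then gives the bound
`2/π + (1 - 2/π) exp (-2 y²)`, a convex combination of `1` and `exp (-2 y²) ≤ 1`. -/

open Real Set

noncomputable def integralExpSq (y : ℝ) : ℝ := ∫ t in (0 : ℝ)..y, exp (t ^ 2)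

lemma continuous_exp_sq : Continuous fun t : ℝ => exp (t ^ 2) := by fun_prop

lemma hasDerivAt_integralExpSq (y : ℝ) : HasDerivAt integralExpSq (exp (y ^ 2)) y :=
  intervalIntegral.integral_hasDerivAt_right (continuous_exp_sq.intervalIntegrable 0 y)
    (continuous_exp_sq.stronglyMeasurableAtFilter _ _) continuous_exp_sq.continuousAt

lemma integralExpSq_neg (y : ℝ) : integralExpSq (-y) = -integralExpSq y := by
  have h := intervalIntegral.integral_comp_neg (a := 0) (b := y) fun t : ℝ => exp (t ^ 2)
  simp only [neg_sq, neg_zero] at h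
  rw [integralExpSq, integralExpSq, h, intervalIntegral.integral_symm]

lemma integralExpSq_le {y : ℝ} (hy : 0 ≤ y) : integralExpSq y ≤ y * exp (y ^ 2) := by
  have h : integralExpSq y ≤ ∫ _ in (0 : ℝ)..y, exp (y ^ 2) :=
    intervalIntegral.integral_mono_on hy (continuous_exp_sq.intervalIntegrable 0 y)
      intervalIntegrable_const fun t ht => exp_le_exp.mpr (by nlinarith [ht.1, ht.2])
  simpa using h

lemma hasDerivAt_exp_two_mul_sq_sub_one_div_two (x : ℝ) :
    HasDerivAt (fun z : ℝ => (exp (2 * z ^ 2) - 1) / 2) (2 * x * exp (2 * x ^ 2)) x :=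
  ((((hasDerivAt_pow 2 x).const_mul 2).exp).sub_const 1).div_const 2 |>.congr_deriv (by
    push_cast; ring)

lemma sq_integralExpSq_le_of_nonneg {y : ℝ} (hy : 0 ≤ y) :
    integralExpSq y ^ 2 ≤ (exp (2 * y ^ 2) - 1) / 2 := by
  have hF : ∀ x, HasDerivAt (fun z => integralExpSq z ^ 2)
      (2 * integralExpSq x * exp (x ^ 2)) x := fun x =>
    ((hasDerivAt_integralExpSq x).pow 2).congr_deriv (by ring)
  have hB := hasDerivAt_exp_two_mul_sq_sub_one_div_two
  refine image_le_of_deriv_right_le_deriv_boundary (a := 0) (b := y)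
    (fun x _ => (hF x).continuousAt.continuousWithinAt) (fun x _ => (hF x).hasDerivWithinAt)
    (by simp [integralExpSq]) (fun x _ => (hB x).continuousAt.continuousWithinAt)
    (fun x _ => (hB x).hasDerivWithinAt) (fun x hx => ?_) ⟨hy, le_rfl⟩
  have hexp : exp (2 * x ^ 2) = exp (x ^ 2) * exp (x ^ 2) := by rw [← exp_add]; ring_nf
  rw [hexp, ← mul_assoc, mul_assoc 2 x]
  gcongr
  exact integralExpSq_le hx.1

lemma sq_integralExpSq_le (y : ℝ) : integralExpSq y ^ 2 ≤ (exp (2 * y ^ 2) - 1) / 2 := by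
  rcases le_total 0 y with hy | hy
  · exact sq_integralExpSq_le_of_nonneg hy
  · simpa [integralExpSq_neg, neg_sq] using sq_integralExpSq_le_of_nonneg (neg_nonneg.mpr hy)

theorem stmt_19 (y : ℝ) :
    Real.exp (-2 * y ^ 2) * (1 + 4 / Real.pi * (∫ t in (0 : ℝ)..y, Real.exp (t ^ 2)) ^ 2) ≤
        2 / Real.pi + (1 - 2 / Real.pi) * Real.exp (-2 * y ^ 2) ∧
      Real.exp (-2 * y ^ 2) * (1 + 4 / Real.pi * (∫ t in (0 : ℝ)..y, Real.exp (t ^ 2)) ^ 2) ≤ 1 := by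
  set c := 2 / π
  set E := exp (-2 * y ^ 2)
  have hc : 0 ≤ c := by positivity
  have hc1 : c ≤ 1 := (div_le_one pi_pos).mpr two_le_pi
  have hE : 0 ≤ E := (exp_pos _).le
  have hE1 : E ≤ 1 := exp_le_one_iff.mpr (by nlinarith [sq_nonneg y])
  have hEX : E * exp (2 * y ^ 2) = 1 := by rw [← exp_add]; ring_nf; exact exp_zero
  have hI := sq_integralExpSq_le y
  have h4 : 4 / π = 2 * c := by ring
  have key : E * (1 + 4 / π * integralExpSq y ^ 2) ≤ c + (1 - c) * E := by
    calc E * (1 + 4 / π * integralExpSq y ^ 2)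
        ≤ E * (1 + 2 * c * ((exp (2 * y ^ 2) - 1) / 2)) := by rw [h4]; gcongr
      _ = c + (1 - c) * E := by linear_combination c * hEX
  exact ⟨key, key.trans (by nlinarith)⟩
end
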